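/- arXiv:2001.07468 — 5 statements merged into one kernel-verified Lean document; each statement's English description precedes it below -/
import Mathlib

section
/- Let u = (u_i)_{i≥0} be the sequence with values in ℤ/4ℤ where u_i is the coefficient of x^i in 2x + (3x + 2x³)·φ(x) reduced modulo 4, i.e., u_i ≡ 3C_{i-1} + 2C_{i-3} + 2·[i = 1] (mod 4) with the convention C_j = 0 for j < 0. Then the 2-kernel of u is finite, i.e., u is 2-automatic. (This is the automaticity part of Theorem 1.1: Stiel_p modulo 4 is 2-automatic.) -/
/-- The `k`-kernel of a sequence `u`. -/
def kKernel {α : Type*} (k : ℕ) (u : ℕ → α) : Set (ℕ → α) :=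
  {g | ∃ e j : ℕ, j < k ^ e ∧ g = fun n => u (k ^ e * n + j)}

/-- The sequence of coefficients (mod 4) of `2x + (3x + 2x³)·φ(x)`, where `φ` is the
generating function of the Catalan numbers: `u i = 3 C_{i-1} + 2 C_{i-3} + 2·[i = 1]`,
with the convention `C_j = 0` for `j < 0`. -/
def u (i : ℕ) : ZMod 4 :=
  3 * (if 1 ≤ i then (catalan (i - 1) : ZMod 4) else 0) +
    2 * (if 3 ≤ i then (catalan (i - 3) : ZMod 4) else 0) +
    (if i = 1 then 2 else 0)


/-!
Write `s(m)` for the number of ones in the binary expansion of `m`. Modulo 4, `C_{m-1}` is `1`, `2`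
or `0` according as `s(m) = 1`, `s(m) = 2` or `s(m) ≥ 3`. This follows from the Catalan recurrence
by induction: writing the residues as `p + 2q` with `p` the indicator of the powers of two, the
convolution square is `p * p` modulo 4, and `(p * p)(m)` counts the ordered ways of writing `m` as
a sum of two powers of two, which is read off the binary expansion of `m`.

Since `s(j + 2^e n) = s(j) + s(n)` for `j < 2^e`, for `e ≥ 3` every kernel sequence
`n ↦ u(2^e n + j)` is a function of `s(n)` vanishing from `s(n) = 3` on, and there are only
finitely many such sequences.
-/

open Finset

namespace Nat

def binaryWeight (n : ℕ) : ℕ := n.bitIndices.length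

theorem bitIndices_add_two_pow_mul {e j : ℕ} (hj : j < 2 ^ e) (n : ℕ) :
    (j + 2 ^ e * n).bitIndices = j.bitIndices ++ n.bitIndices.map (· + e) := by
  have hsorted : (j.bitIndices ++ n.bitIndices.map (· + e)).SortedLT := by
    rw [List.sortedLT_iff_pairwise, List.pairwise_append, List.pairwise_map]
    refine ⟨bitIndices_sorted.pairwise, bitIndices_sorted.pairwise.imp (by omega), ?_⟩
    intro a ha b hb
    obtain ⟨b, -, rfl⟩ := List.mem_map.1 hb
    have := (Nat.pow_lt_pow_iff_right (by norm_num)).1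
      ((two_pow_le_of_mem_bitIndices ha).trans_lt hj)
    omega
  rw [← bitIndices_sum_map_two_pow hsorted]
  simp [Function.comp_def, pow_add, mul_comm _ (2 ^ e), List.sum_map_mul_left]

theorem binaryWeight_add_two_pow_mul {e j : ℕ} (hj : j < 2 ^ e) (n : ℕ) :
    binaryWeight (j + 2 ^ e * n) = binaryWeight j + binaryWeight n := by
  simp [binaryWeight, bitIndices_add_two_pow_mul hj]

theorem binaryWeight_eq_zero_iff {n : ℕ} : binaryWeight n = 0 ↔ n = 0 := by
  refine ⟨fun h => ?_, fun h => by simp [h, binaryWeight]⟩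
  rw [← sum_map_two_pow_bitIndices n, List.eq_nil_of_length_eq_zero h]
  rfl

theorem binaryWeight_eq_one_iff {n : ℕ} : binaryWeight n = 1 ↔ ∃ c, n = 2 ^ c := by
  refine ⟨fun h => ?_, fun ⟨c, hc⟩ => by simp [hc, binaryWeight]⟩
  obtain ⟨c, hc⟩ := List.length_eq_one_iff.1 h
  exact ⟨c, by rw [← sum_map_two_pow_bitIndices n, hc]; simp⟩

theorem bitIndices_two_pow_add_two_pow (x y : ℕ) :
    (2 ^ x + 2 ^ y).bitIndices = if x = y then [x + 1] else [min x y, max x y] := by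
  split_ifs with h
  · subst h; rw [← two_mul, ← pow_succ', bitIndices_two_pow]
  · have hsorted : [min x y, max x y].SortedLT := by
      simp [List.sortedLT_iff_pairwise]; omega
    rw [← bitIndices_sum_map_two_pow hsorted]
    rcases le_total x y with hxy | hxy <;> simp [hxy, add_comm]

def twoPowPairs (m : ℕ) : Finset (ℕ × ℕ) :=
  {ab ∈ antidiagonal m | binaryWeight ab.1 = 1 ∧ binaryWeight ab.2 = 1}

theorem mem_twoPowPairs {m a b : ℕ} :
    (a, b) ∈ twoPowPairs m ↔ ∃ x y, a = 2 ^ x ∧ b = 2 ^ y ∧ 2 ^ x + 2 ^ y = m := by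
  simp only [twoPowPairs, mem_filter, HasAntidiagonal.mem_antidiagonal, binaryWeight_eq_one_iff]
  constructor
  · rintro ⟨rfl, ⟨x, rfl⟩, ⟨y, rfl⟩⟩
    exact ⟨x, y, rfl, rfl, rfl⟩
  · rintro ⟨x, y, rfl, rfl, rfl⟩
    exact ⟨rfl, ⟨x, rfl⟩, ⟨y, rfl⟩⟩

theorem twoPowPairs_two_pow_succ (c : ℕ) : twoPowPairs (2 ^ (c + 1)) = {(2 ^ c, 2 ^ c)} := by
  ext ⟨a, b⟩
  rw [mem_twoPowPairs, mem_singleton, Prod.mk.injEq]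
  constructor
  · rintro ⟨x, y, rfl, rfl, h⟩
    have h := congrArg bitIndices h
    rw [bitIndices_two_pow_add_two_pow, bitIndices_two_pow] at h
    split_ifs at h with hxy
    · simp_all
    · simp at h
  · rintro ⟨rfl, rfl⟩
    exact ⟨c, c, rfl, rfl, by rw [← two_mul, pow_succ']⟩

theorem twoPowPairs_two_pow_add_two_pow {c d : ℕ} (hdc : d < c) :
    twoPowPairs (2 ^ d + 2 ^ c) = {(2 ^ d, 2 ^ c), (2 ^ c, 2 ^ d)} := by
  ext ⟨a, b⟩
  rw [mem_twoPowPairs, mem_insert, mem_singleton, Prod.mk.injEq, Prod.mk.injEq]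
  constructor
  · rintro ⟨x, y, rfl, rfl, h⟩
    have h := congrArg bitIndices h
    rw [bitIndices_two_pow_add_two_pow, bitIndices_two_pow_add_two_pow, if_neg hdc.ne] at h
    split_ifs at h with hxy
    · simp at h
    · rcases lt_or_gt_of_ne hxy with h' | h'
      · simp_all [min_eq_left h'.le, max_eq_right h'.le, hdc.le]
      · simp_all [min_eq_right h'.le, max_eq_left h'.le, hdc.le]
  · rintro (⟨rfl, rfl⟩ | ⟨rfl, rfl⟩)
    · exact ⟨d, c, rfl, rfl, rfl⟩
    · exact ⟨c, d, rfl, rfl, add_comm _ _⟩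

theorem twoPowPairs_eq_empty {m : ℕ} (hm : 3 ≤ binaryWeight m) : twoPowPairs m = ∅ := by
  refine eq_empty_of_forall_notMem fun ⟨a, b⟩ hab => ?_
  obtain ⟨x, y, -, -, rfl⟩ := mem_twoPowPairs.1 hab
  rw [binaryWeight, bitIndices_two_pow_add_two_pow] at hm
  split_ifs at hm <;> simp at hm

theorem card_twoPowPairs {m : ℕ} (hm : 2 ≤ m) :
    #(twoPowPairs m) = if binaryWeight m = 1 then 1 else if binaryWeight m = 2 then 2 else 0 := by
  have hsum := sum_map_two_pow_bitIndices m
  unfold binaryWeight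
  match hL : m.bitIndices with
  | [] => simp [hL] at hsum; omega
  | [0] => simp [hL] at hsum; omega
  | [c + 1] =>
    simp only [hL, List.map_cons, List.map_nil, List.sum_cons, List.sum_nil, add_zero] at hsum
    simp [← hsum, twoPowPairs_two_pow_succ]
  | [d, c] =>
    simp only [hL, List.map_cons, List.map_nil, List.sum_cons, List.sum_nil, add_zero] at hsum
    have hdc : d < c := by
      simpa [hL, List.sortedLT_iff_pairwise] using bitIndices_sorted (n := m)
    simp [← hsum, twoPowPairs_two_pow_add_two_pow hdc, hdc.ne]
  | _ :: _ :: _ :: _ =>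
    rw [twoPowPairs_eq_empty (by simp [binaryWeight, hL])]
    simp

end Nat

open Nat

theorem sum_antidiagonal_add_two_mul_mul {R : Type*} [CommSemiring R] (h4 : (4 : R) = 0)
    (p q : ℕ → R) (m : ℕ) :
    ∑ ab ∈ antidiagonal m, (p ab.1 + 2 * q ab.1) * (p ab.2 + 2 * q ab.2) =
      ∑ ab ∈ antidiagonal m, p ab.1 * p ab.2 := by
  have hswap :
      ∑ ab ∈ antidiagonal m, q ab.1 * p ab.2 = ∑ ab ∈ antidiagonal m, p ab.1 * q ab.2 := by
    rw [← Nat.sum_antidiagonal_swap]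
    simp [mul_comm]
  calc _ = ∑ ab ∈ antidiagonal m, p ab.1 * p ab.2 +
        2 * (∑ ab ∈ antidiagonal m, p ab.1 * q ab.2 +
          ∑ ab ∈ antidiagonal m, q ab.1 * p ab.2) +
        4 * ∑ ab ∈ antidiagonal m, q ab.1 * q ab.2 := by
        simp only [mul_sum, ← sum_add_distrib]
        exact sum_congr rfl fun _ _ => by ring
    _ = ∑ ab ∈ antidiagonal m, p ab.1 * p ab.2 +
        4 * (∑ ab ∈ antidiagonal m, p ab.1 * q ab.2 +
          ∑ ab ∈ antidiagonal m, q ab.1 * q ab.2) := by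
        rw [hswap]; ring
    _ = _ := by rw [h4, zero_mul, add_zero]

def catalanResidue (k : ℕ) : ZMod 4 := if k = 1 then 1 else if k = 2 then 2 else 0

theorem catalanResidue_eq (k : ℕ) :
    catalanResidue k = (if k = 1 then 1 else 0) + 2 * (if k = 2 then 1 else 0) := by
  unfold catalanResidue
  split_ifs <;> first | rfl | omega

theorem catalan_cast_zmod_four (n : ℕ) :
    (catalan n : ZMod 4) = catalanResidue (binaryWeight (n + 1)) := by
  induction n using Nat.strong_induction_on with
  | _ n ih =>
  rcases n with _ | n
  · simp [binaryWeight, catalanResidue]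
  set g : ℕ → ZMod 4 := fun m => catalanResidue (binaryWeight m)
  have hg0 : g 0 = 0 := by simp [g, binaryWeight, catalanResidue]
  have hconv : ∑ ab ∈ antidiagonal (n + 2), g ab.1 * g ab.2 =
      ∑ ab ∈ antidiagonal n, g (ab.1 + 1) * g (ab.2 + 1) := by
    rw [Nat.sum_antidiagonal_succ, Nat.sum_antidiagonal_succ']
    simp [hg0]
  have hcount := card_twoPowPairs (m := n + 2) (by omega)
  rw [catalan_succ', Nat.cast_sum]
  calc _ = ∑ ab ∈ antidiagonal n, g (ab.1 + 1) * g (ab.2 + 1) := by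
        refine sum_congr rfl fun ab hab => ?_
        rw [HasAntidiagonal.mem_antidiagonal] at hab
        rw [Nat.cast_mul, ih _ (by omega), ih _ (by omega)]
    _ = ∑ ab ∈ antidiagonal (n + 2),
          (if binaryWeight ab.1 = 1 ∧ binaryWeight ab.2 = 1 then 1 else 0 : ZMod 4) := by
        rw [← hconv]
        simp only [g, catalanResidue_eq]
        exact (sum_antidiagonal_add_two_mul_mul rfl (fun k => if binaryWeight k = 1 then 1 else 0)
          (fun k => if binaryWeight k = 2 then 1 else 0) _).trans
          (sum_congr rfl fun _ _ => ite_zero_mul_ite_zero _ _ _ _)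
    _ = _ := by
        rw [sum_boole, ← twoPowPairs, hcount]
        unfold catalanResidue
        split_ifs <;> rfl

theorem two_mul_catalanResidue (k : ℕ) : 2 * catalanResidue k = if k = 1 then 2 else 0 := by
  unfold catalanResidue
  split_ifs <;> rfl

theorem u_eq (i : ℕ) :
    u i = 3 * catalanResidue (binaryWeight i) + 2 * catalanResidue (binaryWeight (i - 2)) +
      if i = 1 then 2 else 0 := by
  have hres : ∀ k, 1 ≤ k → (catalan (k - 1) : ZMod 4) = catalanResidue (binaryWeight k) :=
    fun k hk => by rw [catalan_cast_zmod_four, Nat.sub_add_cancel hk]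
  unfold u
  rcases Nat.lt_or_ge i 3 with hi | hi
  · have h0 : binaryWeight 0 = 0 := binaryWeight_eq_zero_iff.2 rfl
    have h1 : binaryWeight 1 = 1 := binaryWeight_eq_one_iff.2 ⟨0, rfl⟩
    have h2 : binaryWeight 2 = 1 := binaryWeight_eq_one_iff.2 ⟨1, rfl⟩
    interval_cases i <;> simp [catalanResidue, h0, h1, h2]
  · rw [if_pos (by omega), if_pos hi, hres i (by omega), show i - 3 = i - 2 - 1 by omega,
      hres _ (by omega)]

theorem binaryWeight_add_two_pow_mul_sub_two_eq_one_iff {e j n : ℕ} (he : 3 ≤ e)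
    (hj : j < 2 ^ e) (hn : n ≠ 0) :
    binaryWeight (j + 2 ^ e * n - 2) = 1 ↔ j = 2 ∧ binaryWeight n = 1 := by
  have hn' : binaryWeight n ≠ 0 := binaryWeight_eq_zero_iff.not.2 hn
  rcases Nat.lt_or_ge j 2 with hj2 | hj2
  · have h8 : 8 ∣ 2 ^ e * n := (pow_dvd_pow 2 he).mul_right n
    have hpos : 0 < 2 ^ e * n := by positivity
    refine ⟨fun h => ?_, fun h => by omega⟩
    obtain ⟨c, hc⟩ := binaryWeight_eq_one_iff.1 h
    rcases c with _ | _ | c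
    · omega
    · omega
    · have : 4 ∣ 2 ^ (c + 2) := Dvd.intro_left _ (pow_add 2 c 2).symm
      omega
  · rw [show j + 2 ^ e * n - 2 = (j - 2) + 2 ^ e * n by omega,
      binaryWeight_add_two_pow_mul (by omega)]
    have := binaryWeight_eq_zero_iff (n := j - 2)
    omega

theorem u_add_two_pow_mul {e j n : ℕ} (he : 3 ≤ e) (hj : j < 2 ^ e) (hn : n ≠ 0) :
    u (j + 2 ^ e * n) = 3 * catalanResidue (binaryWeight j + binaryWeight n) +
      if j = 2 ∧ binaryWeight n = 1 then 2 else 0 := by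
  have h8 : 8 ≤ 2 ^ e * n :=
    (Nat.pow_le_pow_right two_pos he).trans (Nat.le_mul_of_pos_right _ (Nat.pos_of_ne_zero hn))
  rw [u_eq, binaryWeight_add_two_pow_mul hj, two_mul_catalanResidue,
    if_neg (show j + 2 ^ e * n ≠ 1 by omega), add_zero]
  simp only [binaryWeight_add_two_pow_mul_sub_two_eq_one_iff he hj hn]

theorem exists_u_two_pow_mul_add_eq_comp_binaryWeight {e j : ℕ} (he : 3 ≤ e) (hj : j < 2 ^ e) :
    ∃ ψ : ℕ → ZMod 4, (∀ k, 3 ≤ k → ψ k = 0) ∧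
      (fun n => u (2 ^ e * n + j)) = ψ ∘ binaryWeight := by
  refine ⟨fun k => if k = 0 then u j else
    3 * catalanResidue (binaryWeight j + k) + if j = 2 ∧ k = 1 then 2 else 0, ?_, ?_⟩
  · intro k hk
    simp [catalanResidue, show k ≠ 0 by omega, show k ≠ 1 by omega,
      show binaryWeight j + k ≠ 1 by omega, show binaryWeight j + k ≠ 2 by omega]
  · funext n
    rcases eq_or_ne n 0 with rfl | hn
    · simp [binaryWeight]
    · simp only [Function.comp_apply, binaryWeight_eq_zero_iff, hn, if_false]
      rw [add_comm, u_add_two_pow_mul he hj hn]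

theorem finite_setOf_eq_comp_of_eventually_zero {α : Type*} [Finite α] [Zero α] (w : ℕ → ℕ)
    (N : ℕ) :
    {f : ℕ → α | ∃ ψ : ℕ → α, (∀ k, N ≤ k → ψ k = 0) ∧ f = ψ ∘ w}.Finite := by
  refine (Set.finite_range fun (c : Fin N → α) n =>
    if h : w n < N then c ⟨w n, h⟩ else 0).subset ?_
  rintro f ⟨ψ, hψ, rfl⟩
  refine ⟨fun k => ψ k, funext fun n => ?_⟩
  by_cases h : w n < N
  · simp [h]
  · simp [h, hψ _ (not_lt.1 h)]

/-- (Theorem 1.1, automaticity part.) `Stiel_p` modulo 4 is 2-automatic: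
its 2-kernel is finite. -/
theorem stmt1 : (kKernel 2 u).Finite := by
  refine ((Set.finite_range fun p : Fin 3 × Fin 8 => fun n => u (2 ^ (p.1 : ℕ) * n + p.2)).union
    (finite_setOf_eq_comp_of_eventually_zero (α := ZMod 4) binaryWeight 3)).subset ?_
  rintro f ⟨e, j, hj, rfl⟩
  rcases Nat.lt_or_ge e 3 with he | he
  · have : 2 ^ e ≤ 2 ^ 2 := Nat.pow_le_pow_right two_pos (by omega)
    exact Or.inl ⟨(⟨e, he⟩, ⟨j, by omega⟩), rfl⟩
  · exact Or.inr (exists_u_two_pow_mul_add_eq_comp_binaryWeight he hj)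
end

section
/- Let k ≥ 2 and m ≥ 2 be integers, let c = (c_n)_{n≥0} be a sequence of integers whose k-kernel is finite (i.e., c is k-automatic), and let (F_n(x))_{n≥0} be any sequence of polynomials in ℤ[x] satisfying the recurrence F_n(x) = F_{n-1}(x) + c_n·x·F_{n-2}(x) for all n ≥ 2. Write F_n(x) = Σ_{i≥0} a_{n,i} x^i. Then for every i ≥ 0, the sequence (a_{n,i} mod m)_{n≥0} with values in ℤ/mℤ has finite k-kernel, i.e., it is k-automatic. -/
open Polynomial

section kKernel

variable {α β γ : Type*} (k : ℕ)

theorem kKernel_const_finite (a : α) : (kKernel k fun _ => a).Finite := by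
  apply (Set.finite_singleton fun _ : ℕ => a).subset
  rintro g ⟨e, j, -, rfl⟩
  rfl

theorem kKernel_map₂_finite (f : α → β → γ) {u : ℕ → α} {v : ℕ → β}
    (hu : (kKernel k u).Finite) (hv : (kKernel k v).Finite) :
    (kKernel k fun n => f (u n) (v n)).Finite := by
  apply ((hu.prod hv).image fun p n => f (p.1 n) (p.2 n)).subset
  rintro g ⟨e, j, hj, rfl⟩
  exact ⟨(_, _), ⟨⟨e, j, hj, rfl⟩, ⟨e, j, hj, rfl⟩⟩, rfl⟩

theorem kKernel_map_finite (f : α → β) {u : ℕ → α} (hu : (kKernel k u).Finite) :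
    (kKernel k fun n => f (u n)).Finite :=
  kKernel_map₂_finite k (fun a _ => f a) hu (kKernel_const_finite k ())

theorem kKernel_shift_finite (t : ℕ) {u : ℕ → α} (hu : (kKernel k u).Finite) :
    (kKernel k fun n => u (n + t)).Finite := by
  apply ((hu.prod (Set.finite_Iic t)).image fun p n => p.1 (n + p.2)).subset
  rintro g ⟨e, j, hj, rfl⟩
  have hpos : 0 < k ^ e := j.zero_le.trans_lt hj
  -- `k^e n + j + t = k^e (n + q) + r` with `(q, r)` the division of `j + t` by `k^e`
  refine ⟨(fun n => u (k ^ e * n + (j + t) % k ^ e), (j + t) / k ^ e),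
    ⟨⟨e, _, Nat.mod_lt _ hpos, rfl⟩, ?_⟩, ?_⟩
  · rw [Set.mem_Iic, Nat.div_le_iff_le_mul_add_pred hpos]
    have := Nat.le_mul_of_pos_left t hpos
    omega
  · funext n
    have := Nat.div_add_mod (j + t) (k ^ e)
    simp only [Nat.mul_add]
    congr 1
    omega

theorem kKernel_finite_of_tail {u : ℕ → α} (h : (kKernel k fun n => u (n + 1)).Finite) :
    (kKernel k u).Finite := by
  apply (h.union (h.image fun g n => Nat.casesOn n (u 0) g)).subset
  rintro g ⟨e, j, hj, rfl⟩
  rcases j.eq_zero_or_pos with rfl | hj₀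
  · -- `n ↦ u (k^e n)` is `u 0` followed by the tail's subsequence `n ↦ u (k^e n + (k^e - 1) + 1)`
    refine .inr ⟨_, ⟨e, k ^ e - 1, by omega, rfl⟩, funext fun n => ?_⟩
    cases n with
    | zero => simp
    | succ n =>
      show u (k ^ e * n + (k ^ e - 1) + 1) = u (k ^ e * (n + 1) + 0)
      rw [Nat.mul_succ]
      congr 1
      omega
  · refine .inl ⟨e, j - 1, by omega, funext fun n => ?_⟩
    show u (k ^ e * n + j) = u (k ^ e * n + (j - 1) + 1)
    congr 1
    omega

end kKernel

theorem Finset.sum_range_mul_add {M : Type*} [AddCommMonoid M] (u : ℕ → M) (b n j : ℕ) :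
    ∑ t ∈ range (b * n + j), u t =
      ∑ t ∈ range n, ∑ r ∈ range b, u (b * t + r) + ∑ r ∈ range j, u (b * n + r) := by
  rw [sum_range_add]
  congr 1
  induction n with
  | zero => simp
  | succ n ih => rw [Nat.mul_succ, sum_range_add, ih, sum_range_succ]

section PartialSums

variable {R : Type*} [Semiring R] (k : ℕ)

theorem sum_mem_span_kKernel (u : ℕ → R) {e j : ℕ} (hj : j ≤ k ^ e) :
    (fun n => ∑ r ∈ Finset.range j, u (k ^ e * n + r)) ∈ Submodule.span R (kKernel k u) := by
  have hsum : (fun n => ∑ r ∈ Finset.range j, u (k ^ e * n + r)) =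
      ∑ r ∈ Finset.range j, fun n => u (k ^ e * n + r) := by
    funext n
    simp
  rw [hsum]
  exact Submodule.sum_mem _ fun r hr =>
    Submodule.subset_span ⟨e, r, (Finset.mem_range.mp hr).trans_le hj, rfl⟩

theorem kKernel_partialSum_finite [Finite R] (a : R) {u : ℕ → R} (hu : (kKernel k u).Finite) :
    (kKernel k fun n => a + ∑ t ∈ Finset.range n, u t).Finite := by
  set V := Submodule.span R (kKernel k u)
  have : Module.Finite R V := Module.Finite.span_of_finite R hu
  have : Finite V := Module.finite_of_finite R
  have hV : (V : Set (ℕ → R)).Finite := Set.toFinite _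
  apply ((hV.prod hV).image fun p n => a + ∑ t ∈ Finset.range n, p.1 t + p.2 n).subset
  rintro g ⟨e, j, hj, rfl⟩
  -- `∑_{t < k^e n + j} u t` splits into whole blocks of length `k^e` and one partial block
  refine ⟨(fun n => ∑ r ∈ Finset.range (k ^ e), u (k ^ e * n + r),
      fun n => ∑ r ∈ Finset.range j, u (k ^ e * n + r)),
    ⟨sum_mem_span_kKernel k u le_rfl, sum_mem_span_kKernel k u hj.le⟩, funext fun n => ?_⟩
  simp only [Finset.sum_range_mul_add, add_assoc]

theorem kKernel_finite_of_add_two [Finite R] {u v : ℕ → R} (hv : (kKernel k v).Finite)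
    (hrec : ∀ n, u (n + 2) = u (n + 1) + v n) : (kKernel k u).Finite := by
  have htail : (fun n => u (n + 1)) = fun n => u 1 + ∑ t ∈ Finset.range n, v t := by
    funext n
    induction n with
    | zero => simp
    | succ n ih => rw [Finset.sum_range_succ, ← add_assoc, ← ih, hrec]
  apply kKernel_finite_of_tail
  rw [htail]
  exact kKernel_partialSum_finite k _ hv

end PartialSums

section Coefficients

variable {R : Type*} [Semiring R] {F : ℕ → R[X]} {c : ℕ → R}
  (hF : ∀ n, F (n + 2) = F (n + 1) + C (c (n + 2)) * X * F n)
include hF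

theorem coeff_zero_add_two_of_recurrence (n : ℕ) :
    (F (n + 2)).coeff 0 = (F (n + 1)).coeff 0 := by
  simp [hF n, mul_assoc]

theorem coeff_succ_add_two_of_recurrence (n i : ℕ) :
    (F (n + 2)).coeff (i + 1) = (F (n + 1)).coeff (i + 1) + c (n + 2) * (F n).coeff i := by
  simp [hF n, mul_assoc]

end Coefficients

theorem stmt4_general (k m : ℕ) (hm : 2 ≤ m)
    (c : ℕ → ℤ) (hc : (kKernel k c).Finite)
    (F : ℕ → Polynomial ℤ)
    (hF : ∀ n : ℕ, F (n + 2) = F (n + 1) + Polynomial.C (c (n + 2)) * Polynomial.X * F n) :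
    ∀ i : ℕ, (kKernel k (fun n => (((F n).coeff i : ℤ) : ZMod m))).Finite := by
  have : NeZero m := ⟨by omega⟩
  intro i
  induction i with
  | zero =>
    refine kKernel_finite_of_add_two k (kKernel_const_finite k 0) fun n => ?_
    rw [coeff_zero_add_two_of_recurrence hF, add_zero]
  | succ i ih =>
    have hc' : (kKernel k fun n => ((c (n + 2) : ℤ) : ZMod m)).Finite :=
      kKernel_shift_finite k 2 (kKernel_map_finite k _ hc)
    refine kKernel_finite_of_add_two k (kKernel_map₂_finite k (· * ·) hc' ih) fun n => ?_
    rw [coeff_succ_add_two_of_recurrence hF]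
    push_cast
    rfl

/-- (Proposition 3.1.) If `c` is a `k`-automatic integer sequence and `(F n)` is a sequence
of integer polynomials satisfying `F n = F (n-1) + c n · x · F (n-2)` for `n ≥ 2`, then for
every `i` the coefficient sequence `(coeff of x^i in F n, mod m)` is `k`-automatic. -/
theorem stmt4 (k m : ℕ) (hk : 2 ≤ k) (hm : 2 ≤ m)
    (c : ℕ → ℤ) (hc : (kKernel k c).Finite)
    (F : ℕ → Polynomial ℤ)
    (hF : ∀ n : ℕ, F (n + 2) = F (n + 1) + Polynomial.C (c (n + 2)) * Polynomial.X * F n) :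
    ∀ i : ℕ, (kKernel k (fun n => (((F n).coeff i : ℤ) : ZMod m))).Finite :=
  stmt4_general k m hm c hc F hF
end

section
/- Let k ≥ 2 be an integer and let a = (a_n)_{n≥0} be a sequence with values in {-1,1} ⊆ ℤ whose k-kernel is finite (i.e., a is k-automatic). For n ≥ 0 set b_n = ∏_{i=0}^{2n} a_i, and for n ≥ 1 set H_n = ∏_{i=0}^{n-1} b_i, so that by Heilermann's formula H_n = a_0^n (a_1 a_2)^{n-1}(a_3 a_4)^{n-2}···(a_{2n-3} a_{2n-2}) is the n-th order Hankel determinant of the power series expansion of Stiel_a(x). Then the sequence (H_n)_{n≥1} (with values in {-1,1}) has finite k-kernel; in particular, for every integer m ≥ 2 the sequence (H_n mod m)_{n≥1} is k-automatic. -/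
theorem Finset.prod_range_mul_eq_prod_range_prod_range {M : Type*} [CommMonoid M]
    (f : ℕ → M) (q n : ℕ) :
    ∏ i ∈ range (q * n), f i = ∏ r ∈ range q, ∏ m ∈ range n, f (q * m + r) := by
  induction n with
  | zero => simp
  | succ n ih =>
    rw [Nat.mul_succ, prod_range_add, ih, ← prod_mul_distrib]
    simp [prod_range_succ]

theorem Monoid.ExponentExists.pi {ι G : Type*} [Monoid G] (hG : Monoid.ExponentExists G) :
    Monoid.ExponentExists (ι → G) := by
  obtain ⟨n, hn, hpow⟩ := hG
  exact ⟨n, hn, fun f => funext fun i => hpow (f i)⟩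

theorem Subgroup.finite_closure_of_exponentExists {G : Type*} [CommGroup G]
    (hG : Monoid.ExponentExists G) {s : Set G} (hs : s.Finite) :
    (closure s : Set G).Finite := by
  have : Finite s := hs
  have := CommGroup.finite_of_fg_isMulTorsion _
    ((ExponentExists.isMulTorsion hG).subgroup (closure s))
  exact Set.toFinite _

section kKernel

variable {α β : Type*} {k : ℕ}

theorem kKernel_comp (g : α → β) (u : ℕ → α) :
    kKernel k (fun n => g (u n)) = (fun f n => g (f n)) '' kKernel k u := by
  ext f
  constructor
  · rintro ⟨e, j, hj, rfl⟩
    exact ⟨_, ⟨e, j, hj, rfl⟩, rfl⟩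
  · rintro ⟨_, ⟨e, j, hj, rfl⟩, rfl⟩
    exact ⟨e, j, hj, rfl⟩

theorem Set.Finite.kKernel_comp {u : ℕ → α} (hu : (kKernel k u).Finite) (g : α → β) :
    (kKernel k (fun n => g (u n))).Finite := by
  rw [_root_.kKernel_comp]
  exact hu.image _

/-- Writing `c j + d = k^e q + r` with `r < k^e`, the kernel element of `u (c n + d)` at `(e, j)`
is `g (c n + q)` for the kernel element `g` of `u` at `(e, r)`, and `q ≤ c + d`. -/
theorem Set.Finite.kKernel_affine (hk : 0 < k) {u : ℕ → α} (hu : (kKernel k u).Finite)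
    (c d : ℕ) : (kKernel k (fun n => u (c * n + d))).Finite := by
  refine ((hu.prod (Set.finite_Iic (c + d))).image
    fun p : (ℕ → α) × ℕ => fun n => p.1 (c * n + p.2)).subset ?_
  rintro f ⟨e, j, hj, rfl⟩
  have hke : 0 < k ^ e := pow_pos hk e
  refine ⟨⟨fun n => u (k ^ e * n + (c * j + d) % k ^ e), (c * j + d) / k ^ e⟩,
    ⟨⟨e, _, Nat.mod_lt _ hke, rfl⟩, ?_⟩, ?_⟩
  · rw [Set.mem_Iic, Nat.div_le_iff_le_mul_add_pred hke]
    nlinarith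
  · funext n
    have hdiv := Nat.div_add_mod (c * j + d) (k ^ e)
    dsimp only
    congr 1
    linear_combination hdiv

/-- The kernel element of the partial products of `u` at `(e, j)` is
`∏_{r < k^e} P g_r * ∏_{r < j} g_r`, where `P` takes partial products and `g_r` is the kernel
element of `u` at `(e, r)`. -/
theorem Set.Finite.kKernel_partialProd {G : Type*} [CommGroup G] (hG : Monoid.ExponentExists G)
    {u : ℕ → G} (hu : (kKernel k u).Finite) :
    (kKernel k (fun n => ∏ i ∈ Finset.range n, u i)).Finite := by
  set P : (ℕ → G) → ℕ → G := fun g n => ∏ i ∈ Finset.range n, g i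
  refine (Subgroup.finite_closure_of_exponentExists hG.pi (hu.union (hu.image P))).subset ?_
  rintro f ⟨e, j, hj, rfl⟩
  have hg : ∀ r < k ^ e, (fun n => u (k ^ e * n + r)) ∈ kKernel k u :=
    fun r hr => ⟨e, r, hr, rfl⟩
  have hf : (fun n => ∏ i ∈ Finset.range (k ^ e * n + j), u i) =
      (∏ r ∈ Finset.range (k ^ e), P fun n => u (k ^ e * n + r)) *
        ∏ r ∈ Finset.range j, fun n => u (k ^ e * n + r) := by
    funext n
    simp only [Pi.mul_apply, Finset.prod_apply, P, Finset.prod_range_add,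
      Finset.prod_range_mul_eq_prod_range_prod_range]
  rw [hf]
  refine Subgroup.mul_mem _ (Subgroup.prod_mem _ fun r hr => ?_)
    (Subgroup.prod_mem _ fun r hr => ?_)
  · exact Subgroup.subset_closure (Or.inr ⟨_, hg r (Finset.mem_range.1 hr), rfl⟩)
  · exact Subgroup.subset_closure (Or.inl (hg r ((Finset.mem_range.1 hr).trans hj)))

end kKernel

/-- If `a` is a `k`-automatic `±1`-sequence, `b n = ∏_{i=0}^{2n} a i` and
`H n = ∏_{i=0}^{n-1} b i` (by Heilermann's formula, `H n` is the `n`-th order Hankel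
determinant of `Stiel_a(x)`), then the sequence `(H n)_{n ≥ 1}` has finite `k`-kernel;
in particular for every `m ≥ 2` the sequence `(H n mod m)_{n ≥ 1}` is `k`-automatic. -/
theorem stmt5 (k : ℕ) (hk : 2 ≤ k) (a : ℕ → ℤ)
    (ha : ∀ n, a n = 1 ∨ a n = -1) (haut : (kKernel k a).Finite)
    (b H : ℕ → ℤ)
    (hb : ∀ n, b n = ∏ i ∈ Finset.range (2 * n + 1), a i)
    (hH : ∀ n, H n = ∏ i ∈ Finset.range n, b i) :
    (kKernel k (fun n => H (n + 1))).Finite ∧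
      ∀ m : ℕ, 2 ≤ m → (kKernel k (fun n => ((H (n + 1) : ℤ) : ZMod m))).Finite := by
  have hk0 : 0 < k := by omega
  have hexp : Monoid.ExponentExists ℤˣ := Monoid.ExponentExists.of_finite
  set toUnit : ℤ → ℤˣ := fun x => if x = 1 then 1 else -1
  have ha_eq : ∀ n, a n = toUnit (a n) := fun n => by rcases ha n with h | h <;> simp [toUnit, h]
  set β : ℕ → ℤˣ := fun n => ∏ i ∈ Finset.range (2 * n + 1), toUnit (a i)
  have hβ : (kKernel k β).Finite :=
    ((haut.kKernel_comp toUnit).kKernel_partialProd hexp).kKernel_affine hk0 2 1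
  have hH_eq : ∀ n, H (n + 1) = ((∏ i ∈ Finset.range (1 * n + 1), β i : ℤˣ) : ℤ) := by
    simp [hH, hb, β, Units.coe_prod, ← ha_eq]
  have hHunits := (hβ.kKernel_partialProd hexp).kKernel_affine hk0 1 1
  refine ⟨?_, fun m _ => ?_⟩
  · simp only [hH_eq]
    exact hHunits.kKernel_comp _
  · simp only [hH_eq]
    exact hHunits.kKernel_comp fun x : ℤˣ => ((x : ℤ) : ZMod m)
end

section
/- Let p be the paperfolding sequence. For every n ≥ 2 the following hold: (i) p_{2^n + j} = p_j for all 0 ≤ j ≤ 2^{n-1} − 2; (ii) p_{2^n + 2^{n-1} − 1} = −1; (iii) p_{2^n + 2^{n-1} + j} = p_{2^{n-1} + j} for all 0 ≤ j ≤ 2^{n-1} − 1. (Equivalently, the block p_{2^n}···p_{2^{n+1}−1} equals p_0···p_{2^{n-1}−2} followed by −1 followed by p_{2^{n-1}}···p_{2^n−1}, reflecting that σ^n(a) and σ^n(c) differ only in the last letter for the paperfolding substitution σ.) -/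
/-! Even positions of `p` only see their residue mod 4, and `p (2m + 1) = p m` halves odd
positions, so by induction on `n` the block of length `2^(n+1)` starting at `2^(n+1)` repeats
`p_0 ⋯ p_{2^(n+1)-1}` except at offset `2^n - 1`: halving `2^n - 1` ends at `0`, whereas halving
`2^(n+1) + 2^n - 1` ends at `2`, where `p` is `-1`. -/

theorem paperfolding_four_mul_add_two_mul {p : ℕ → ℤ}
    (hp4 : ∀ n, p (4 * n) = 1) (hp42 : ∀ n, p (4 * n + 2) = -1) (a k : ℕ) :
    p (4 * a + 2 * k) = p (2 * k) := by
  obtain ⟨b, rfl | rfl⟩ := Nat.even_or_odd' k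
  · rw [show 4 * a + 2 * (2 * b) = 4 * (a + b) by ring, show 2 * (2 * b) = 4 * b by ring,
      hp4, hp4]
  · rw [show 4 * a + 2 * (2 * b + 1) = 4 * (a + b) + 2 by ring,
      show 2 * (2 * b + 1) = 4 * b + 2 by ring, hp42, hp42]

theorem paperfolding_two_pow_succ_add {p : ℕ → ℤ}
    (hp4 : ∀ n, p (4 * n) = 1) (hp42 : ∀ n, p (4 * n + 2) = -1)
    (hpodd : ∀ n, p (2 * n + 1) = p n) (n m : ℕ) (hm : m < 2 ^ (n + 1))
    (hm' : m ≠ 2 ^ n - 1) : p (2 ^ (n + 1) + m) = p m := by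
  induction n generalizing m with
  | zero =>
    obtain rfl : m = 1 := by simp only [zero_add, pow_one, pow_zero] at hm hm'; omega
    exact hpodd 1
  | succ n ih =>
    have hpos : 1 ≤ 2 ^ n := Nat.one_le_two_pow
    obtain ⟨k, rfl | rfl⟩ := Nat.even_or_odd' m
    · rw [show 2 ^ (n + 1 + 1) = 4 * 2 ^ n by ring]
      exact paperfolding_four_mul_add_two_mul hp4 hp42 _ k
    · have hk : k < 2 ^ (n + 1) := by rw [pow_succ] at hm ⊢; omega
      have hk' : k ≠ 2 ^ n - 1 := by rw [pow_succ] at hm'; omega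
      rw [show 2 ^ (n + 1 + 1) + (2 * k + 1) = 2 * (2 ^ (n + 1) + k) + 1 by ring, hpodd,
        hpodd, ih k hk hk']

theorem paperfolding_two_pow_succ_add_two_pow_sub_one {p : ℕ → ℤ}
    (hp42 : ∀ n, p (4 * n + 2) = -1) (hpodd : ∀ n, p (2 * n + 1) = p n) (n : ℕ) :
    p (2 ^ (n + 1) + 2 ^ n - 1) = -1 := by
  induction n with
  | zero => simpa using hp42 0
  | succ n ih =>
    have hpos : 1 ≤ 2 ^ n := Nat.one_le_two_pow
    rw [show 2 ^ (n + 1 + 1) + 2 ^ (n + 1) - 1 = 2 * (2 ^ (n + 1) + 2 ^ n - 1) + 1 by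
      rw [pow_succ, pow_succ]; omega, hpodd, ih]

theorem stmt6_general (p : ℕ → ℤ)
    (hp4 : ∀ n, p (4 * n) = 1) (hp42 : ∀ n, p (4 * n + 2) = -1)
    (hpodd : ∀ n, p (2 * n + 1) = p n) :
    ∀ n : ℕ, 2 ≤ n →
      (∀ j : ℕ, j ≤ 2 ^ (n - 1) - 2 → p (2 ^ n + j) = p j) ∧
      p (2 ^ n + 2 ^ (n - 1) - 1) = -1 ∧
      (∀ j : ℕ, j ≤ 2 ^ (n - 1) - 1 → p (2 ^ n + 2 ^ (n - 1) + j) = p (2 ^ (n - 1) + j)) := by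
  intro n hn
  obtain ⟨n, rfl⟩ : ∃ k, n = k + 1 := ⟨n - 1, by omega⟩
  have hpow : 2 ≤ 2 ^ n := Nat.le_self_pow (by omega) 2
  have hsucc : 2 ^ (n + 1) = 2 * 2 ^ n := by ring
  rw [Nat.add_sub_cancel]
  refine ⟨fun j hj => ?_, paperfolding_two_pow_succ_add_two_pow_sub_one hp42 hpodd n,
    fun j hj => ?_⟩
  · exact paperfolding_two_pow_succ_add hp4 hp42 hpodd n j (by omega) (by omega)
  · rw [add_assoc]
    exact paperfolding_two_pow_succ_add hp4 hp42 hpodd n _ (by omega) (by omega)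

/-- The block structure of the paperfolding sequence: for `n ≥ 2`, the block
`p_{2^n} ⋯ p_{2^{n+1}-1}` equals `p_0 ⋯ p_{2^{n-1}-2}` followed by `-1` followed by
`p_{2^{n-1}} ⋯ p_{2^n-1}`. -/
theorem stmt6 (p : ℕ → ℤ) (hp0 : p 0 = 1)
    (hp4 : ∀ n, p (4 * n) = 1) (hp42 : ∀ n, p (4 * n + 2) = -1)
    (hpodd : ∀ n, p (2 * n + 1) = p n) :
    ∀ n : ℕ, 2 ≤ n →
      (∀ j : ℕ, j ≤ 2 ^ (n - 1) - 2 → p (2 ^ n + j) = p j) ∧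
      p (2 ^ n + 2 ^ (n - 1) - 1) = -1 ∧
      (∀ j : ℕ, j ≤ 2 ^ (n - 1) - 1 → p (2 ^ n + 2 ^ (n - 1) + j) = p (2 ^ (n - 1) + j)) :=
  stmt6_general p hp4 hp42 hpodd
end

section
/- Let p be the paperfolding sequence and let P^b, Q^b be defined from the blocks p_{2^n}···p_{2^{n+1}−1}. Then for all n ≥ 4: (1) Q^b_{2^n−2}(x) ≡ 1 + 2(x + x² + x³ + x⁴) + 2(x + x²)·S_{n-2}(x) + 2T_{n-2}(x) (mod 4); (2) Q^b_{2^n−1}(x) ≡ (1 + 2x) + 2x·S_{n-2}(x) + S_{n-1}(x) (mod 4); (3) P^b_{2^n−2}(x) ≡ 2x + 2(1 + x)·S_{n-2}(x) + S_{n-1}(x) (mod 4); (4) P^b_{2^n−1}(x) ≡ (3x + 2x⁵) + 2(1 + x³)·S_{n-2}(x) + 2(1 + x)·T_{n-2}(x) (mod 4). -/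
open Polynomial

/-- The elementary matrix `[[0, c_i x],[1,1]]` used to build the convergents of a
Stieltjes continued fraction. -/
noncomputable def step (c : ℕ → ℤ) (i : ℕ) : Matrix (Fin 2) (Fin 2) (Polynomial ℤ) :=
  !![0, Polynomial.C (c i) * Polynomial.X; 1, 1]

/-- `S_n(x) = Σ_{i=0}^{n} x^{2^i}`. -/
noncomputable def Spoly (n : ℕ) : Polynomial ℤ :=
  ∑ i ∈ Finset.range (n + 1), Polynomial.X ^ (2 ^ i)

/-- `T_n(x) = Σ_{i=3}^{n} Σ_{k=2}^{i-1} x^{2^i + 2^k}` (so `T_2 = 0`). -/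
noncomputable def Tpoly (n : ℕ) : Polynomial ℤ :=
  ∑ i ∈ Finset.Icc 3 n, ∑ k ∈ Finset.Icc 2 (i - 1), Polynomial.X ^ (2 ^ i + 2 ^ k)

/-!
Write `M(c) = !![0, c X; 1, 1]`. Since `p (2 j) = (-1) ^ j` and `p (2 j + 1) = p j`, pairing
neighbouring factors of the block `p_{2^n} ⋯ p_{2^{n+1}-1}` repeatedly turns its product into
`L_n(-1) M(1)`, where `L_0 = 1` and `L_{r+1}(c) = L_r(1) M(c) L_r(-1)`. As
`M(c) = diag(X, 1) !![0, c; 1, 1]`, the matrices `L_r(c) diag(X, 1)` obey the same recursion with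
`!![0, c; 1, 1]` in the middle, and modulo 4 they have closed forms in `S_k`, `T_k` and
`X ^ 2 ^ (k + 1)`. These closed forms propagate through the recursion because of the integral
identity `S_k ^ 2 = S_{k+1} - X + 2 (X ^ 3 + (X + X ^ 2) (S_k - X - X ^ 2) + T_k)`, which is
just the expansion of the square of a sum of distinct powers `X ^ 2 ^ i`.
-/

section Fold

variable {R : Type*} [CommRing R]

noncomputable def stepMatrix (c : R) : Matrix (Fin 2) (Fin 2) R[X] :=
  !![0, C c * X; 1, 1]

noncomputable def foldMatrix : ℕ → R → Matrix (Fin 2) (Fin 2) R[X]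
  | 0, _ => 1
  | r + 1, c => foldMatrix r 1 * stepMatrix c * foldMatrix r (-1)

theorem stepMatrix_eq_mul (c : R) :
    stepMatrix c = !![X, 0; 0, 1] * !![0, C c; 1, 1] := by
  rw [stepMatrix, Matrix.mul_fin_two]
  simp [X_mul_C]

theorem foldMatrix_succ_mul (r : ℕ) (c : R) :
    foldMatrix (r + 1) c * !![X, 0; 0, 1] =
      foldMatrix r 1 * !![X, 0; 0, 1] * !![0, C c; 1, 1] *
        (foldMatrix r (-1) * !![X, 0; 0, 1]) := by
  simp only [foldMatrix, stepMatrix_eq_mul, Matrix.mul_assoc]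

theorem mapMatrix_stepMatrix {S : Type*} [CommRing S] (f : R →+* S) (c : R) :
    (mapRingHom f).mapMatrix (stepMatrix c) = stepMatrix (f c) := by
  ext i j
  fin_cases i <;> fin_cases j <;> simp [stepMatrix]

theorem mapMatrix_foldMatrix {S : Type*} [CommRing S] (f : R →+* S) (r : ℕ) (c : R) :
    (mapRingHom f).mapMatrix (foldMatrix r c) = foldMatrix r (f c) := by
  induction r generalizing c with
  | zero => exact map_one _
  | succ r ih => simp only [foldMatrix, map_mul, ih, mapMatrix_stepMatrix, map_one, map_neg]

end Fold

theorem step_eq_stepMatrix (c : ℕ → ℤ) (i : ℕ) : step c i = stepMatrix (c i) := rfl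

theorem List.prod_map_range_two_mul {M : Type*} [Monoid M] (m : ℕ) (f : ℕ → M) :
    ((List.range (2 * m)).map f).prod =
      ((List.range m).map fun k => f (2 * k) * f (2 * k + 1)).prod := by
  induction m with
  | zero => simp
  | succ m ih =>
    rw [show 2 * (m + 1) = 2 * m + 1 + 1 by ring, List.range_succ, List.range_succ, List.range_succ]
    simp [ih]

section Paperfolding

variable {p : ℕ → ℤ} (hp4 : ∀ n, p (4 * n) = 1) (hp42 : ∀ n, p (4 * n + 2) = -1)
  (hpodd : ∀ n, p (2 * n + 1) = p n)
include hp4 hp42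

theorem paperfolding_two_mul (n : ℕ) : p (2 * n) = (-1) ^ n := by
  rcases Nat.even_or_odd' n with ⟨k, rfl | rfl⟩
  · rw [show 2 * (2 * k) = 4 * k by ring, hp4, pow_mul]
    norm_num
  · rw [show 2 * (2 * k + 1) = 4 * k + 2 by ring, hp42, pow_succ, pow_mul]
    norm_num

include hpodd

theorem prod_step_eq_prod_foldMatrix (r : ℕ) {N : ℕ} (hN : Even N) :
    ((List.range (2 ^ r * N)).map fun i => step p (2 ^ r * N + i)).prod =
      ((List.range N).map fun k => foldMatrix r ((-1) ^ k) * step p (N + k)).prod := by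
  induction r generalizing N with
  | zero => simp [foldMatrix]
  | succ r ih =>
    rw [pow_succ, mul_assoc, ih (even_two_mul N), List.prod_map_range_two_mul]
    refine congrArg List.prod (List.map_congr_left fun k _ => ?_)
    have hsign : (-1 : ℤ) ^ (N + k) = (-1) ^ k := by rw [pow_add, hN.neg_one_pow, one_mul]
    have heven : (-1 : ℤ) ^ (2 * k) = 1 := by simp [pow_mul]
    have hodd : (-1 : ℤ) ^ (2 * k + 1) = -1 := by simp [pow_succ, heven]
    rw [show 2 * N + 2 * k = 2 * (N + k) by ring,
      show 2 * N + (2 * k + 1) = 2 * (N + k) + 1 by ring, heven, hodd, foldMatrix]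
    simp only [step_eq_stepMatrix]
    rw [paperfolding_two_mul hp4 hp42, hsign, hpodd]
    simp only [Matrix.mul_assoc]

theorem prod_step_block_eq (hp0 : p 0 = 1) {n : ℕ} (hn : 1 ≤ n) :
    ((List.range (2 ^ n)).map fun i => step p (2 ^ n + i)).prod =
      foldMatrix n (-1) * stepMatrix 1 := by
  obtain ⟨r, rfl⟩ : ∃ r, n = r + 1 := ⟨n - 1, by omega⟩
  have hp2 : p 2 = -1 := hp42 0
  have hp3 : p 3 = 1 := by rw [hpodd 1, hpodd 0, hp0]
  rw [pow_succ, prod_step_eq_prod_foldMatrix hp4 hp42 hpodd r even_two]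
  rw [show List.range 2 = [0, 1] from rfl]
  simp [step_eq_stepMatrix, hp2, hp3, foldMatrix, Matrix.mul_assoc]

end Paperfolding

section Dyadic

open Finset

theorem Spoly_succ (k : ℕ) : Spoly (k + 1) = Spoly k + X ^ 2 ^ (k + 1) :=
  sum_range_succ _ _

theorem Spoly_one : Spoly 1 = X + X ^ 2 := by
  simp [Spoly, sum_range_succ]

theorem Tpoly_one : Tpoly 1 = 0 := by
  simp [Tpoly]

theorem Spoly_sub_X_sub_X_sq {k : ℕ} (hk : 1 ≤ k) :
    Spoly k - X - X ^ 2 = ∑ j ∈ Icc 2 k, (X : ℤ[X]) ^ 2 ^ j := by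
  induction k, hk using Nat.le_induction with
  | base => simp [Spoly_one]
  | succ k hk ih =>
    rw [Spoly_succ, sum_Icc_succ_top (by omega), ← ih]
    ring

theorem Tpoly_succ {k : ℕ} (hk : 1 ≤ k) :
    Tpoly (k + 1) = Tpoly k + X ^ 2 ^ (k + 1) * (Spoly k - X - X ^ 2) := by
  rcases hk.eq_or_lt with rfl | hk
  · simp [Tpoly, Spoly_one]
  · rw [Tpoly, sum_Icc_succ_top (by omega), Spoly_sub_X_sub_X_sq (by omega), mul_sum]
    simp [Tpoly, pow_add]

theorem Spoly_sq {k : ℕ} (hk : 1 ≤ k) :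
    Spoly k ^ 2 = Spoly k + X ^ 2 ^ (k + 1) - X +
      2 * (X ^ 3 + (X + X ^ 2) * (Spoly k - X - X ^ 2) + Tpoly k) := by
  induction k, hk using Nat.le_induction with
  | base =>
    rw [Spoly_one, Tpoly_one]
    ring
  | succ k hk ih =>
    rw [Spoly_succ, Tpoly_succ hk, show 2 ^ (k + 1 + 1) = 2 ^ (k + 1) * 2 by ring, pow_mul]
    linear_combination ih

end Dyadic

section ClosedForm

variable {R : Type*} [CommRing R]

/-- Closed forms modulo 4 of `foldMatrix (k + 2) (±1) * !![X, 0; 0, 1]`, where `s = S_k`,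
`t = T_k` and `y = X ^ 2 ^ (k + 1)`. -/
def foldPlusForm (x s t y : R) : Matrix (Fin 2) (Fin 2) R :=
  !![s + y - x + 2 * x ^ 4 + 2 * x ^ 3 * (s - x - x ^ 2) + 2 * (1 + x) * t, s + y + 2 * x * s;
     2 * x + 2 * x ^ 2 - s - y + 2 * x ^ 2 * (s - x - x ^ 2) + 2 * t,
     1 + 2 * (1 + x) * (s - x) + 2 * x ^ 2 * (s - x - x ^ 2) + 2 * t]

def foldMinusForm (x s t y : R) : Matrix (Fin 2) (Fin 2) R :=
  !![x - s - y + 2 * x ^ 5 + 2 * x * (1 + x ^ 2) * s + 2 * (1 + x) * t,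
     s + y + 2 * x + 2 * (1 + x) * s;
     s + y + 2 * (x ^ 2 + x ^ 3 + x ^ 4) + 2 * x ^ 2 * s + 2 * t,
     1 + 2 * (x + x ^ 2 + x ^ 3 + x ^ 4) + 2 * (x + x ^ 2) * s + 2 * t]

variable [CharP R 4]

theorem foldMinusForm_mul (x s t y : R) :
    foldMinusForm x s t y * !![0, 1; 1, 1] =
      !![2 * x + 2 * (1 + x) * s + (s + y),
        3 * x + 2 * x ^ 5 + 2 * (1 + x ^ 3) * s + 2 * (1 + x) * t;
        1 + 2 * (x + x ^ 2 + x ^ 3 + x ^ 4) + 2 * (x + x ^ 2) * s + 2 * t,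
        1 + 2 * x + 2 * x * s + (s + y)] := by
  simp only [foldMinusForm, Matrix.mul_fin_two, EmbeddingLike.apply_eq_iff_eq, Matrix.vecCons_inj,
    and_true]
  refine ⟨⟨?_, ?_⟩, ?_, ?_⟩ <;> linear_combination (norm := (ring_nf <;> reduce_mod_char!))

variable {x s t y : R}
  (hsq : s ^ 2 = s + y - x + 2 * (x ^ 3 + (x + x ^ 2) * (s - x - x ^ 2) + t))
include hsq

theorem foldPlusForm_mul_one_mul :
    foldPlusForm x s t y * !![0, 1; 1, 1] * foldMinusForm x s t y =
      foldPlusForm x (s + y) (t + y * (s - x - x ^ 2)) (y ^ 2) := by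
  simp only [foldPlusForm, foldMinusForm, Matrix.mul_fin_two, EmbeddingLike.apply_eq_iff_eq,
    Matrix.vecCons_inj, and_true]
  refine ⟨⟨?_, ?_⟩, ?_, ?_⟩
  · linear_combination (norm := (ring_nf; reduce_mod_char!)) (1 + 2 * x) * hsq
  · linear_combination (norm := (ring_nf; reduce_mod_char!)) 3 * hsq
  · linear_combination (norm := (ring_nf; reduce_mod_char!)) (-1) * hsq
  · linear_combination (norm := (ring_nf; reduce_mod_char!)) 2 * hsq

theorem foldPlusForm_mul_neg_one_mul :
    foldPlusForm x s t y * !![0, -1; 1, 1] * foldMinusForm x s t y =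
      foldMinusForm x (s + y) (t + y * (s - x - x ^ 2)) (y ^ 2) := by
  simp only [foldPlusForm, foldMinusForm, Matrix.mul_fin_two, EmbeddingLike.apply_eq_iff_eq,
    Matrix.vecCons_inj, and_true]
  refine ⟨⟨?_, ?_⟩, ?_, ?_⟩
  · linear_combination (norm := (ring_nf; reduce_mod_char!)) (-1 + 2 * x) * hsq
  · linear_combination (norm := (ring_nf; reduce_mod_char!)) 3 * hsq
  · linear_combination (norm := (ring_nf; reduce_mod_char!)) hsq
  · linear_combination (norm := (ring_nf; reduce_mod_char!)) 2 * hsq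

end ClosedForm

local notation "φ" => Polynomial.mapRingHom (Int.castRingHom (ZMod 4))

theorem foldMatrix_mul_eq_foldForms {k : ℕ} (hk : 1 ≤ k) :
    foldMatrix (k + 2) (1 : ZMod 4) * !![X, 0; 0, 1] =
        foldPlusForm X (φ (Spoly k)) (φ (Tpoly k)) (X ^ 2 ^ (k + 1)) ∧
      foldMatrix (k + 2) (-1 : ZMod 4) * !![X, 0; 0, 1] =
        foldMinusForm X (φ (Spoly k)) (φ (Tpoly k)) (X ^ 2 ^ (k + 1)) := by
  induction k, hk using Nat.le_induction with
  | base =>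
    simp only [foldMatrix_succ_mul 2, foldMatrix_succ_mul 1, foldMatrix_succ_mul 0, foldMatrix.eq_1,
      Matrix.one_mul, Spoly_one, Tpoly_one, map_add, map_pow, map_zero, coe_mapRingHom, map_X,
      map_one, map_neg]
    constructor <;>
      simp only [foldPlusForm, foldMinusForm, Matrix.mul_fin_two, EmbeddingLike.apply_eq_iff_eq,
        Matrix.vecCons_inj, and_true] <;>
      refine ⟨⟨?_, ?_⟩, ?_, ?_⟩ <;>
      linear_combination (norm := (ring_nf <;> reduce_mod_char))
  | succ k hk ih =>
    have hsq := congrArg φ (Spoly_sq hk)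
    simp only [map_add, map_sub, map_mul, map_pow, map_ofNat, coe_mapRingHom, map_X] at hsq
    rw [foldMatrix_succ_mul (k + 2), foldMatrix_succ_mul (k + 2), ih.1, ih.2, map_one, map_neg,
      Spoly_succ, Tpoly_succ hk]
    simp only [map_add, map_sub, map_mul, map_pow, coe_mapRingHom, map_X]
    rw [show 2 ^ (k + 1 + 1) = 2 ^ (k + 1) * 2 by ring, pow_mul]
    exact ⟨foldPlusForm_mul_one_mul hsq, foldPlusForm_mul_neg_one_mul hsq⟩

theorem Polynomial.coeff_modEq_of_map_eq {n : ℕ} {f g : ℤ[X]}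
    (h : mapRingHom (Int.castRingHom (ZMod n)) f = mapRingHom (Int.castRingHom (ZMod n)) g)
    (i : ℕ) : f.coeff i ≡ g.coeff i [ZMOD n] := by
  have := congrArg (coeff · i) h
  simpa [ZMod.intCast_eq_intCast_iff] using this

/-- (Lemma 4.2 (5)–(8).) Mod-4 description of the polynomials `P^b, Q^b` built from the
blocks `p_{2^n} ⋯ p_{2^{n+1}-1}` of the paperfolding sequence. -/
theorem stmt10 (p : ℕ → ℤ) (hp0 : p 0 = 1)
    (hp4 : ∀ n, p (4 * n) = 1) (hp42 : ∀ n, p (4 * n + 2) = -1)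
    (hpodd : ∀ n, p (2 * n + 1) = p n)
    (Pb Qb : ℕ → Polynomial ℤ)
    (hPQb : ∀ n : ℕ, 2 ≤ n →
      !![Pb (2 ^ n - 2), Pb (2 ^ n - 1); Qb (2 ^ n - 2), Qb (2 ^ n - 1)] =
        ((List.range (2 ^ n)).map (fun i => step p (2 ^ n + i))).prod) :
    ∀ n : ℕ, 4 ≤ n →
      (∀ i : ℕ, (Qb (2 ^ n - 2)).coeff i ≡
        (1 + 2 * (X + X ^ 2 + X ^ 3 + X ^ 4) + 2 * (X + X ^ 2) * Spoly (n - 2) +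
          2 * Tpoly (n - 2) : Polynomial ℤ).coeff i [ZMOD 4]) ∧
      (∀ i : ℕ, (Qb (2 ^ n - 1)).coeff i ≡
        ((1 + 2 * X) + 2 * X * Spoly (n - 2) + Spoly (n - 1) :
          Polynomial ℤ).coeff i [ZMOD 4]) ∧
      (∀ i : ℕ, (Pb (2 ^ n - 2)).coeff i ≡
        (2 * X + 2 * (1 + X) * Spoly (n - 2) + Spoly (n - 1) :
          Polynomial ℤ).coeff i [ZMOD 4]) ∧
      (∀ i : ℕ, (Pb (2 ^ n - 1)).coeff i ≡
        ((3 * X + 2 * X ^ 5) + 2 * (1 + X ^ 3) * Spoly (n - 2) +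
          2 * (1 + X) * Tpoly (n - 2) : Polynomial ℤ).coeff i [ZMOD 4]) := by
  intro n hn
  obtain ⟨k, rfl⟩ : ∃ k, n = k + 2 := ⟨n - 2, by omega⟩
  have hM := congrArg (φ).mapMatrix (hPQb (k + 2) (by omega))
  rw [prod_step_block_eq hp4 hp42 hpodd hp0 (by omega), map_mul, mapMatrix_foldMatrix,
    mapMatrix_stepMatrix, map_one, map_neg, map_one, stepMatrix_eq_mul, ← Matrix.mul_assoc,
    (foldMatrix_mul_eq_foldForms (by omega)).2, map_one, foldMinusForm_mul] at hM
  simp only [Nat.add_sub_cancel, show k + 2 - 1 = k + 1 from rfl, Spoly_succ]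
  refine ⟨coeff_modEq_of_map_eq ?_, coeff_modEq_of_map_eq ?_, coeff_modEq_of_map_eq ?_,
    coeff_modEq_of_map_eq ?_⟩
  · simpa using congr($hM 1 0)
  · simpa using congr($hM 1 1)
  · simpa using congr($hM 0 0)
  · simpa using congr($hM 0 1)
end
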